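/- arXiv:1306.5516 — 2 statements merged into one kernel-verified Lean document; each statement's English description precedes it below -/
import Mathlib

section
/- Let f : I ⊂ [0,∞) → ℝ be n-times differentiable on I° with f^(n) ∈ L¹[a,b], a < b, and suppose |f^(n)|^q is s-convex on [a,b] for some s ∈ (0,1], q > 1, p = q/(q-1). Then |Σ_{m=1}^n (-1)^(n-m+2) ((b-a)^m/(2·m!)) [f^(m-1)(b) − (-1)^m f^(m-1)(a)] + (-1)^n ∫_a^b f(x) dx| ≤ ((b-a)^(n+1)/n!)(1/(np+1))^(1/p)(s+1)^(-1/q)(|f^(n)(a)|^q + |f^(n)(b)|^q)^(1/q). -/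
/-!
Integrating by parts `n` times turns the left-hand side into
`1 / (2 n!) * ∫ x in a..b, ((x - a) ^ n + (-1) ^ n * (b - x) ^ n) * f⁽ⁿ⁾ x`.
The kernel is bounded by `(x - a) ^ n + (b - x) ^ n`, and s-convexity of `|f⁽ⁿ⁾| ^ q` along
`x = (1 - t) a + t b` gives `|f⁽ⁿ⁾ x| ^ q ≤ (1 - t) ^ s |f⁽ⁿ⁾ a| ^ q + t ^ s |f⁽ⁿ⁾ b| ^ q`.
Hölder's inequality on each of the two halves of the kernel, together with
`∫ (x - a) ^ (n p) = (b - a) ^ (n p + 1) / (n p + 1)` and `∫ t ^ s = (b - a) / (s + 1)`,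
gives the bound.
-/

open MeasureTheory intervalIntegral Finset

def sConvexOn (s : ℝ) (A : Set ℝ) (g : ℝ → ℝ) : Prop :=
  ∀ x ∈ A, ∀ y ∈ A, ∀ t ∈ Set.Icc (0:ℝ) 1,
    g (t * x + (1 - t) * y) ≤ t ^ s * g x + (1 - t) ^ s * g y

theorem integral_mul_le_Lp_mul_Lq_of_nonneg_of_continuousOn {a b p q : ℝ} (hab : a ≤ b)
    (hpq : p.HolderConjugate q) {F G : ℝ → ℝ}
    (hF : ContinuousOn F (Set.Icc a b)) (hG : ContinuousOn G (Set.Icc a b))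
    (hF0 : ∀ x ∈ Set.Icc a b, 0 ≤ F x) (hG0 : ∀ x ∈ Set.Icc a b, 0 ≤ G x) :
    ∫ x in a..b, F x * G x ≤
      (∫ x in a..b, F x ^ p) ^ (1 / p) * (∫ x in a..b, G x ^ q) ^ (1 / q) := by
  simp only [integral_of_le hab, ← integral_Icc_eq_integral_Ioc]
  have memLp {H : ℝ → ℝ} (hH : ContinuousOn H (Set.Icc a b)) (r : ℝ) :
      MemLp H (ENNReal.ofReal r) (volume.restrict (Set.Icc a b)) := by
    obtain ⟨C, hC⟩ := isCompact_Icc.exists_bound_of_continuousOn hH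
    exact MemLp.of_bound (hH.aestronglyMeasurable measurableSet_Icc) C
      ((ae_restrict_iff' measurableSet_Icc).mpr (.of_forall hC))
  exact integral_mul_le_Lp_mul_Lq_of_nonneg hpq
    ((ae_restrict_iff' measurableSet_Icc).mpr (.of_forall hF0))
    ((ae_restrict_iff' measurableSet_Icc).mpr (.of_forall hG0)) (memLp hF p) (memLp hG q)

theorem integral_pow_mul_rpow_le {a b p q : ℝ} (hab : a ≤ b) (hpq : p.HolderConjugate q)
    (n : ℕ) {w G : ℝ → ℝ} (hw : ContinuousOn w (Set.Icc a b)) (hG : ContinuousOn G (Set.Icc a b))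
    (hw0 : ∀ x ∈ Set.Icc a b, 0 ≤ w x) (hG0 : ∀ x ∈ Set.Icc a b, 0 ≤ G x) :
    ∫ x in a..b, w x ^ n * G x ^ (1 / q) ≤
      (∫ x in a..b, w x ^ (n * p)) ^ (1 / p) * (∫ x in a..b, G x) ^ (1 / q) := by
  have hwp : ∫ x in a..b, (w x ^ n) ^ p = ∫ x in a..b, w x ^ (n * p) :=
    integral_congr fun x hx => by
      rw [Set.uIcc_of_le hab] at hx
      simp only [← Real.rpow_natCast, ← Real.rpow_mul (hw0 x hx)]
  have hGq : ∫ x in a..b, (G x ^ (1 / q)) ^ q = ∫ x in a..b, G x :=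
    integral_congr fun x hx => by
      rw [Set.uIcc_of_le hab] at hx
      simp only [← Real.rpow_mul (hG0 x hx), one_div_mul_cancel hpq.symm.ne_zero, Real.rpow_one]
  rw [← hwp, ← hGq]
  exact integral_mul_le_Lp_mul_Lq_of_nonneg_of_continuousOn hab hpq (hw.pow n)
    (hG.rpow_const fun _ _ => .inr (by positivity [hpq.symm.pos]))
    (fun x hx => pow_nonneg (hw0 x hx) n) fun x hx => Real.rpow_nonneg (hG0 x hx) _

theorem integral_comp_rsub_eq_integral_comp_sub (g : ℝ → ℝ) (a b : ℝ) :
    ∫ x in a..b, g (b - x) = ∫ x in a..b, g (x - a) := by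
  rw [integral_comp_sub_left, integral_comp_sub_right, sub_self, sub_self]

theorem integral_sub_rpow {c : ℝ} (hc : -1 < c) (a b : ℝ) :
    ∫ x in a..b, (x - a) ^ c = (b - a) ^ (c + 1) / (c + 1) := by
  rw [integral_comp_sub_right (· ^ c), sub_self, integral_rpow (.inl hc),
    Real.zero_rpow (by linarith), sub_zero]

theorem integral_rsub_rpow {c : ℝ} (hc : -1 < c) (a b : ℝ) :
    ∫ x in a..b, (b - x) ^ c = (b - a) ^ (c + 1) / (c + 1) := by
  rw [integral_comp_rsub_eq_integral_comp_sub (· ^ c), integral_sub_rpow hc]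

theorem integral_sub_div_rpow {c : ℝ} (hc : -1 < c) {a b : ℝ} (hab : a ≠ b) :
    ∫ x in a..b, ((x - a) / (b - a)) ^ c = (b - a) / (c + 1) := by
  have hba : b - a ≠ 0 := sub_ne_zero.mpr hab.symm
  rw [integral_comp_sub_right (fun u => (u / (b - a)) ^ c), sub_self,
    integral_comp_div (· ^ c) hba, zero_div, div_self hba, integral_rpow (.inl hc),
    Real.one_rpow, Real.zero_rpow (by linarith), smul_eq_mul]
  ring

theorem integral_rsub_div_rpow {c : ℝ} (hc : -1 < c) {a b : ℝ} (hab : a ≠ b) :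
    ∫ x in a..b, ((b - x) / (b - a)) ^ c = (b - a) / (c + 1) := by
  rw [integral_comp_rsub_eq_integral_comp_sub (fun u => (u / (b - a)) ^ c),
    integral_sub_div_rpow hc hab]

noncomputable def sInterpolant (s a b ya yb x : ℝ) : ℝ :=
  ((b - x) / (b - a)) ^ s * ya + ((x - a) / (b - a)) ^ s * yb

theorem sConvexOn.le_sInterpolant {s a b : ℝ} {φ : ℝ → ℝ} (hφ : sConvexOn s (Set.Icc a b) φ)
    (hab : a < b) {x : ℝ} (hx : x ∈ Set.Icc a b) : φ x ≤ sInterpolant s a b (φ a) (φ b) x := by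
  have hba : 0 < b - a := sub_pos.mpr hab
  have ht : (b - x) / (b - a) ∈ Set.Icc (0 : ℝ) 1 :=
    ⟨div_nonneg (sub_nonneg.mpr hx.2) hba.le, (div_le_one hba).mpr (by linarith [hx.1])⟩
  have h1t : 1 - (b - x) / (b - a) = (x - a) / (b - a) := by field_simp; ring
  have hconv := hφ a (Set.left_mem_Icc.mpr hab.le) b (Set.right_mem_Icc.mpr hab.le) _ ht
  rwa [h1t, show (b - x) / (b - a) * a + (x - a) / (b - a) * b = x by field_simp; ring]
    at hconv

theorem continuous_sInterpolant {s : ℝ} (hs : 0 ≤ s) (a b ya yb : ℝ) :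
    Continuous (sInterpolant s a b ya yb) := by
  have hpow {w : ℝ → ℝ} (hw : Continuous w) : Continuous fun x => w x ^ s :=
    hw.rpow_const fun _ => .inr hs
  exact ((hpow (by fun_prop)).mul continuous_const).add
    ((hpow (by fun_prop)).mul continuous_const)

theorem sInterpolant_nonneg {s a b ya yb x : ℝ} (hab : a < b) (hya : 0 ≤ ya) (hyb : 0 ≤ yb)
    (hx : x ∈ Set.Icc a b) : 0 ≤ sInterpolant s a b ya yb x := by
  have hba : 0 < b - a := sub_pos.mpr hab
  have := div_nonneg (sub_nonneg.mpr hx.1) hba.le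
  have := div_nonneg (sub_nonneg.mpr hx.2) hba.le
  unfold sInterpolant
  positivity

theorem integral_sInterpolant {s a b : ℝ} (hs : 0 ≤ s) (hab : a ≠ b) (ya yb : ℝ) :
    ∫ x in a..b, sInterpolant s a b ya yb x = (b - a) / (s + 1) * (ya + yb) := by
  have hpow {w : ℝ → ℝ} (hw : Continuous w) (y : ℝ) :
      IntervalIntegrable (fun x => w x ^ s * y) volume a b :=
    ((hw.rpow_const fun _ => .inr hs).mul continuous_const).intervalIntegrable a b
  unfold sInterpolant
  rw [integral_add (hpow (by fun_prop) ya) (hpow (by fun_prop) yb),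
    intervalIntegral.integral_mul_const, intervalIntegral.integral_mul_const,
    integral_rsub_div_rpow (by linarith) hab, integral_sub_div_rpow (by linarith) hab]
  ring

noncomputable def twoSidedKernel (n : ℕ) (a b x : ℝ) : ℝ :=
  (x - a) ^ n + (-1) ^ n * (b - x) ^ n

noncomputable def endpointSum (f : ℝ → ℝ) (n : ℕ) (a b : ℝ) : ℝ :=
  ∑ m ∈ Icc 1 n, (-1:ℝ) ^ (n - m + 2) * ((b - a) ^ m / (2 * (m.factorial : ℝ))) *
    (iteratedDeriv (m - 1) f b - (-1:ℝ) ^ m * iteratedDeriv (m - 1) f a)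

theorem hasDerivAt_twoSidedKernel_succ (n : ℕ) (a b x : ℝ) :
    HasDerivAt (twoSidedKernel (n + 1) a b) ((n + 1) * twoSidedKernel n a b x) x := by
  have hl : HasDerivAt (fun y => (y - a) ^ (n + 1)) ((n + 1) * (x - a) ^ n) x := by
    simpa using ((hasDerivAt_id x).sub_const a).fun_pow (n + 1)
  have hr : HasDerivAt (fun y => (b - y) ^ (n + 1)) (-((n + 1) * (b - x) ^ n)) x := by
    simpa using ((hasDerivAt_id x).const_sub b).fun_pow (n + 1)
  refine (hl.fun_add (hr.const_mul ((-1 : ℝ) ^ (n + 1)))).congr_deriv ?_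
  rw [twoSidedKernel, pow_succ]
  ring

theorem endpointSum_succ (f : ℝ → ℝ) (n : ℕ) (a b : ℝ) :
    endpointSum f (n + 1) a b = -endpointSum f n a b +
      (b - a) ^ (n + 1) / (2 * ((n + 1).factorial : ℝ)) *
        (iteratedDeriv n f b - (-1) ^ (n + 1) * iteratedDeriv n f a) := by
  rw [endpointSum, sum_Icc_succ_top (Nat.le_add_left 1 n), endpointSum, ← sum_neg_distrib]
  congr 1
  · refine sum_congr rfl fun m hm => ?_
    rw [show n + 1 - m + 2 = n - m + 2 + 1 by grind, pow_succ]
    ring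
  · simp

theorem integral_twoSidedKernel_succ_mul {f : ℝ → ℝ} {n : ℕ} {a b : ℝ}
    (hder : ∀ x ∈ Set.uIcc a b, HasDerivAt (iteratedDeriv n f) (iteratedDeriv (n + 1) f x) x)
    (hint : IntervalIntegrable (iteratedDeriv (n + 1) f) volume a b) :
    ∫ x in a..b, twoSidedKernel (n + 1) a b x * iteratedDeriv (n + 1) f x =
      (b - a) ^ (n + 1) * (iteratedDeriv n f b - (-1) ^ (n + 1) * iteratedDeriv n f a) -
        (n + 1) * ∫ x in a..b, twoSidedKernel n a b x * iteratedDeriv n f x := by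
  rw [integral_mul_deriv_eq_deriv_mul (fun x _ => hasDerivAt_twoSidedKernel_succ n a b x) hder
    ((by unfold twoSidedKernel; fun_prop : Continuous _).intervalIntegrable a b) hint]
  simp only [twoSidedKernel, sub_self, zero_pow n.succ_ne_zero, mul_zero, add_zero, zero_add,
    mul_assoc, intervalIntegral.integral_const_mul]
  ring

theorem endpointSum_add_integral_eq {f : ℝ → ℝ} {a b : ℝ} {n : ℕ}
    (hder : ∀ k < n, ∀ x ∈ Set.uIcc a b,
      HasDerivAt (iteratedDeriv k f) (iteratedDeriv (k + 1) f x) x)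
    (hint : IntervalIntegrable (iteratedDeriv n f) volume a b) :
    endpointSum f n a b + (-1) ^ n * ∫ x in a..b, f x =
      1 / (2 * n.factorial) * ∫ x in a..b, twoSidedKernel n a b x * iteratedDeriv n f x := by
  induction n with
  | zero =>
    simp only [endpointSum, twoSidedKernel, Icc_eq_empty_of_lt zero_lt_one, sum_empty, pow_zero,
      one_mul, iteratedDeriv_zero, Nat.factorial_zero, Nat.cast_one, zero_add]
    rw [intervalIntegral.integral_const_mul]
    ring
  | succ n ih =>
    have hint_n : IntervalIntegrable (iteratedDeriv n f) volume a b :=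
      ContinuousOn.intervalIntegrable fun x hx =>
        (hder n n.lt_succ_self x hx).continuousAt.continuousWithinAt
    have hK : ∫ x in a..b, twoSidedKernel n a b x * iteratedDeriv n f x =
        2 * n.factorial * (endpointSum f n a b + (-1) ^ n * ∫ x in a..b, f x) := by
      rw [ih (fun k hk => hder k (hk.trans n.lt_succ_self)) hint_n]
      field_simp
    rw [integral_twoSidedKernel_succ_mul (hder n n.lt_succ_self) hint, hK, endpointSum_succ,
      Nat.factorial_succ]
    push_cast
    field_simp
    ring

theorem abs_twoSidedKernel_le {n : ℕ} {a b x : ℝ} (hx : x ∈ Set.Icc a b) :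
    |twoSidedKernel n a b x| ≤ (x - a) ^ n + (b - x) ^ n := by
  have hxa : 0 ≤ x - a := sub_nonneg.mpr hx.1
  have hbx : 0 ≤ b - x := sub_nonneg.mpr hx.2
  calc |twoSidedKernel n a b x| ≤ |(x - a) ^ n| + |(-1) ^ n * (b - x) ^ n| := abs_add_le _ _
    _ = (x - a) ^ n + (b - x) ^ n := by
      simp only [abs_mul, abs_pow, abs_neg, abs_one, one_pow, one_mul, abs_of_nonneg hxa,
        abs_of_nonneg hbx]

theorem abs_integral_twoSidedKernel_mul_le {n : ℕ} {a b s p q : ℝ} {g : ℝ → ℝ} (hab : a < b)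
    (hs : 0 ≤ s) (hpq : p.HolderConjugate q) (hg : IntervalIntegrable g volume a b)
    (hsc : sConvexOn s (Set.Icc a b) fun x => |g x| ^ q) :
    |∫ x in a..b, twoSidedKernel n a b x * g x| ≤
      2 * (((b - a) ^ (n * p + 1) / (n * p + 1)) ^ (1 / p) *
        ((b - a) / (s + 1) * (|g a| ^ q + |g b| ^ q)) ^ (1 / q)) := by
  set H := sInterpolant s a b (|g a| ^ q) (|g b| ^ q)
  have hH_cont : Continuous H := continuous_sInterpolant hs _ _ _ _
  have hH_nonneg : ∀ x ∈ Set.Icc a b, 0 ≤ H x := fun x =>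
    sInterpolant_nonneg hab (by positivity) (by positivity)
  have hg_le : ∀ x ∈ Set.Icc a b, |g x| ≤ H x ^ (1 / q) := fun x hx => by
    rw [one_div, Real.le_rpow_inv_iff_of_pos (abs_nonneg _) (hH_nonneg x hx) hpq.symm.pos]
    exact hsc.le_sInterpolant hab hx
  have hH_root_cont : Continuous fun x => H x ^ (1 / q) :=
    hH_cont.rpow_const fun _ => .inr (by positivity [hpq.symm.pos])
  have hnp : -1 < (n : ℝ) * p := neg_one_lt_zero.trans_le (by positivity [hpq.pos])
  have hholder {w : ℝ → ℝ} (hw : Continuous w) (hw0 : ∀ x ∈ Set.Icc a b, 0 ≤ w x) :=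
    integral_pow_mul_rpow_le hab.le hpq n hw.continuousOn hH_cont.continuousOn hw0 hH_nonneg
  have hleft := hholder (w := fun x => x - a) (by fun_prop) fun x hx => sub_nonneg.mpr hx.1
  have hright := hholder (w := fun x => b - x) (by fun_prop) fun x hx => sub_nonneg.mpr hx.2
  rw [integral_sub_rpow hnp, integral_sInterpolant hs hab.ne] at hleft
  rw [integral_rsub_rpow hnp, integral_sInterpolant hs hab.ne] at hright
  have hK_cont : Continuous (twoSidedKernel n a b) := by unfold twoSidedKernel; fun_prop
  have hint {w : ℝ → ℝ} (hw : Continuous w) :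
      IntervalIntegrable (fun x => w x * H x ^ (1 / q)) volume a b :=
    (hw.mul hH_root_cont).intervalIntegrable a b
  calc |∫ x in a..b, twoSidedKernel n a b x * g x|
      ≤ ∫ x in a..b, |twoSidedKernel n a b x * g x| := abs_integral_le_integral_abs hab.le
    _ ≤ ∫ x in a..b, ((x - a) ^ n + (b - x) ^ n) * H x ^ (1 / q) := by
      refine integral_mono_on hab.le (hg.continuousOn_mul hK_cont.continuousOn).abs
        (hint (by fun_prop)) fun x hx => ?_
      rw [abs_mul]
      exact mul_le_mul (abs_twoSidedKernel_le hx) (hg_le x hx) (abs_nonneg _)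
        ((abs_nonneg _).trans (abs_twoSidedKernel_le hx))
    _ = (∫ x in a..b, (x - a) ^ n * H x ^ (1 / q)) +
          ∫ x in a..b, (b - x) ^ n * H x ^ (1 / q) := by
      simp only [add_mul]
      exact integral_add (hint (by fun_prop)) (hint (by fun_prop))
    _ ≤ _ := by linarith

theorem Real.HolderConjugate.rpow_one_div_mul_rpow_one_div_eq {p q : ℝ}
    (hpq : p.HolderConjugate q) (n : ℕ) {s D M : ℝ} (hD : 0 < D) (hs : 0 < s + 1) (hM : 0 ≤ M) :
    (D ^ (n * p + 1) / (n * p + 1)) ^ (1 / p) * (D / (s + 1) * M) ^ (1 / q) =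
      D ^ (n + 1) * (1 / (n * p + 1)) ^ (1 / p) * (s + 1) ^ (-1 / q) * M ^ (1 / q) := by
  have hp := hpq.pos
  have hnp : 0 < (n : ℝ) * p + 1 := by positivity
  have hexp : (n * p + 1) * (1 / p) + 1 / q = n + 1 := by
    rw [add_mul, mul_assoc, mul_one_div_cancel hp.ne', mul_one, one_mul, one_div, one_div,
      add_assoc, hpq.inv_add_inv_eq_one]
  rw [Real.div_rpow (by positivity) hnp.le, Real.mul_rpow (by positivity) hM,
    Real.div_rpow hD.le hs.le, ← Real.rpow_mul hD.le, one_div (_ + 1), Real.inv_rpow hnp.le,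
    neg_div, Real.rpow_neg hs.le, ← Real.rpow_natCast, Nat.cast_add_one, ← hexp,
    Real.rpow_add hD]
  ring

theorem stmt15_general (I : Set ℝ) (f : ℝ → ℝ) (n : ℕ) (a b : ℝ)
    (hab : a < b) (hsub : Set.Icc a b ⊆ interior I)
    (hdiff : ∀ k < n, DifferentiableOn ℝ (iteratedDeriv k f) (interior I))
    (hint : IntervalIntegrable (iteratedDeriv n f) volume a b)
    (s : ℝ) (hs : s ∈ Set.Ioc (0:ℝ) 1) (p q : ℝ) (hq : 1 < q) (hp : p = q / (q - 1))
    (hsc : sConvexOn s (Set.Icc a b) (fun x => |iteratedDeriv n f x| ^ q)) :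
    |(∑ m ∈ Finset.Icc 1 n, (-1:ℝ) ^ (n - m + 2) * ((b - a) ^ m / (2 * (m.factorial : ℝ))) * (iteratedDeriv (m - 1) f b - (-1:ℝ) ^ m * iteratedDeriv (m - 1) f a)) + (-1:ℝ) ^ n * (∫ x in a..b, f x)| ≤
      ((b - a) ^ (n + 1) / (n.factorial : ℝ)) * ((1 / ((n:ℝ) * p + 1)) ^ (1 / p)) *
        (s + 1) ^ (-1 / q) *
        (|iteratedDeriv n f a| ^ q + |iteratedDeriv n f b| ^ q) ^ (1 / q) := by
  have hpq : p.HolderConjugate q := hp ▸ (Real.HolderConjugate.conjExponent hq).symm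
  have hder : ∀ k < n, ∀ x ∈ Set.uIcc a b,
      HasDerivAt (iteratedDeriv k f) (iteratedDeriv (k + 1) f x) x := fun k hk x hx => by
    rw [Set.uIcc_of_le hab.le] at hx
    rw [iteratedDeriv_succ]
    exact ((hdiff k hk).differentiableAt (isOpen_interior.mem_nhds (hsub hx))).hasDerivAt
  change |endpointSum f n a b + (-1) ^ n * ∫ x in a..b, f x| ≤ _
  rw [endpointSum_add_integral_eq hder hint, abs_mul, abs_of_pos (by positivity)]
  refine (mul_le_mul_of_nonneg_left (abs_integral_twoSidedKernel_mul_le hab hs.1.le hpq hint hsc)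
    (by positivity)).trans_eq ?_
  rw [hpq.rpow_one_div_mul_rpow_one_div_eq n (sub_pos.mpr hab) (by linarith [hs.1])
    (by positivity)]
  field_simp

theorem stmt15 (I : Set ℝ) (f : ℝ → ℝ) (n : ℕ) (a b : ℝ)
    (hI : I ⊆ Set.Ici (0:ℝ)) (hab : a < b) (hsub : Set.Icc a b ⊆ interior I)
    (hdiff : ∀ k < n, DifferentiableOn ℝ (iteratedDeriv k f) (interior I))
    (hint : IntervalIntegrable (iteratedDeriv n f) volume a b)
    (s : ℝ) (hs : s ∈ Set.Ioc (0:ℝ) 1) (p q : ℝ) (hq : 1 < q) (hp : p = q / (q - 1))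
    (hsc : sConvexOn s (Set.Icc a b) (fun x => |iteratedDeriv n f x| ^ q)) :
    |(∑ m ∈ Finset.Icc 1 n, (-1:ℝ) ^ (n - m + 2) * ((b - a) ^ m / (2 * (m.factorial : ℝ))) * (iteratedDeriv (m - 1) f b - (-1:ℝ) ^ m * iteratedDeriv (m - 1) f a)) + (-1:ℝ) ^ n * (∫ x in a..b, f x)| ≤
      ((b - a) ^ (n + 1) / (n.factorial : ℝ)) * ((1 / ((n:ℝ) * p + 1)) ^ (1 / p)) *
        (s + 1) ^ (-1 / q) *
        (|iteratedDeriv n f a| ^ q + |iteratedDeriv n f b| ^ q) ^ (1 / q) :=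
  stmt15_general I f n a b hab hsub hdiff hint s hs p q hq hp hsc
end

section
/- Let f : I ⊂ [0,∞) → ℝ be n-times differentiable on I° with f^(n) ∈ L¹[a,b], a < b, and suppose |f^(n)|^q is s-concave on [a,b] for some s ∈ (0,1], q > 1, p = q/(q-1). Then |Σ_{m=1}^n (-1)^(n-m+2) ((b-a)^m/(2·m!)) [f^(m-1)(b) − (-1)^m f^(m-1)(a)] + (-1)^n ∫_a^b f(x) dx| ≤ ((b-a)^(n+1)/n!)(1/(np+1))^(1/p)·2^((s-1)/q)·|f^(n)((a+b)/2)|. -/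
/-
Integrating by parts `n` times against the kernel `K_n x = ((x - a)^n + (x - b)^n) / (2 n!)`
(with `K_{n+1}' = K_n`) turns the left-hand side into `∫ K_n f⁽ⁿ⁾` over `[a, b]`. As `|K_n|` is
symmetric about the midpoint, `∫ |K_n f⁽ⁿ⁾|` is `∫ |K_n|` against the average of `|f⁽ⁿ⁾|` at `x`
and `a + b - x`; s-concavity at `t = 1/2` and convexity of `t ↦ t^q` bound that average by
`2^((s-1)/q) |f⁽ⁿ⁾((a+b)/2)|`. Finally `∫ |K_n| ≤ (b - a)^(n+1) / (n+1)!`, and Bernoulli's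
inequality gives `1/(n+1) ≤ (1/(np+1))^(1/p)`.
-/

open MeasureTheory intervalIntegral Finset

def sConcaveOn (s : ℝ) (A : Set ℝ) (g : ℝ → ℝ) : Prop :=
  ∀ x ∈ A, ∀ y ∈ A, ∀ t ∈ Set.Icc (0:ℝ) 1,
    t ^ s * g x + (1 - t) ^ s * g y ≤ g (t * x + (1 - t) * y)

noncomputable def peanoKernel (a b : ℝ) (n : ℕ) (x : ℝ) : ℝ :=
  ((x - a) ^ n + (x - b) ^ n) / (2 * n.factorial)

section PeanoKernel

variable {a b : ℝ} {n : ℕ}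

theorem continuous_peanoKernel : Continuous (peanoKernel a b n) := by
  unfold peanoKernel; fun_prop

theorem hasDerivAt_peanoKernel_succ (x : ℝ) :
    HasDerivAt (peanoKernel a b (n + 1)) (peanoKernel a b n x) x := by
  have hpow (c : ℝ) : HasDerivAt (fun x => (x - c) ^ (n + 1)) ((n + 1) * (x - c) ^ n) x := by
    simpa using ((hasDerivAt_id x).sub_const c).fun_pow (n + 1)
  refine (((hpow a).fun_add (hpow b)).div_const (2 * ((n + 1).factorial : ℝ))).congr_deriv ?_
  rw [peanoKernel, Nat.factorial_succ]
  push_cast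
  field_simp

theorem peanoKernel_succ_left :
    peanoKernel a b (n + 1) a = (-1) ^ (n + 1) * ((b - a) ^ (n + 1) / (2 * (n + 1).factorial)) := by
  rw [peanoKernel, sub_self, zero_pow n.succ_ne_zero, zero_add, ← neg_sub b a, neg_pow]
  ring

theorem peanoKernel_succ_right :
    peanoKernel a b (n + 1) b = (b - a) ^ (n + 1) / (2 * (n + 1).factorial) := by
  rw [peanoKernel, sub_self, zero_pow n.succ_ne_zero, add_zero]

theorem abs_peanoKernel_reflect (x : ℝ) :
    |peanoKernel a b n (a + b - x)| = |peanoKernel a b n x| := by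
  rw [peanoKernel, peanoKernel, show a + b - x - a = -(x - b) by ring,
    show a + b - x - b = -(x - a) by ring, neg_pow (x - b), neg_pow (x - a), ← mul_add, add_comm,
    mul_div_assoc, abs_mul, abs_pow, abs_neg, abs_one, one_pow, one_mul]

theorem integral_abs_peanoKernel_le (hab : a ≤ b) :
    ∫ x in a..b, |peanoKernel a b n x| ≤ (b - a) ^ (n + 1) / (n + 1).factorial := by
  have hle : ∫ x in a..b, |peanoKernel a b n x|
      ≤ ∫ x in a..b, ((x - a) ^ n + (b - x) ^ n) / (2 * n.factorial) := by
    refine integral_mono_on hab (continuous_peanoKernel.abs.intervalIntegrable _ _)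
      (Continuous.intervalIntegrable (by fun_prop) _ _) fun x hx => ?_
    rw [peanoKernel, abs_div, abs_of_pos (by positivity : (0:ℝ) < 2 * n.factorial)]
    gcongr
    calc |(x - a) ^ n + (x - b) ^ n| ≤ |x - a| ^ n + |x - b| ^ n := by
          rw [← abs_pow, ← abs_pow]; exact abs_add_le _ _
      _ = (x - a) ^ n + (b - x) ^ n := by
          rw [abs_of_nonneg (sub_nonneg.2 hx.1), abs_sub_comm, abs_of_nonneg (sub_nonneg.2 hx.2)]
  have hpow : ∫ x in a..b, (x - a) ^ n = (b - a) ^ (n + 1) / (n + 1) := by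
    simp [integral_comp_sub_right (fun y => y ^ n), integral_pow]
  have hpow' : ∫ x in a..b, (b - x) ^ n = (b - a) ^ (n + 1) / (n + 1) := by
    simp [integral_comp_sub_left (fun y => y ^ n), integral_pow]
  rw [intervalIntegral.integral_div, integral_add (Continuous.intervalIntegrable (by fun_prop) _ _)
    (Continuous.intervalIntegrable (by fun_prop) _ _), hpow, hpow'] at hle
  refine hle.trans_eq ?_
  rw [Nat.factorial_succ]
  push_cast
  field_simp
  ring

end PeanoKernel

noncomputable def boundarySum (f : ℝ → ℝ) (a b : ℝ) (n : ℕ) : ℝ :=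
  ∑ m ∈ Icc 1 n, (-1:ℝ) ^ (n - m + 2) * ((b - a) ^ m / (2 * (m.factorial : ℝ))) *
    (iteratedDeriv (m - 1) f b - (-1:ℝ) ^ m * iteratedDeriv (m - 1) f a)

theorem boundarySum_succ (f : ℝ → ℝ) (a b : ℝ) (n : ℕ) :
    boundarySum f a b (n + 1) = peanoKernel a b (n + 1) b * iteratedDeriv n f b -
      peanoKernel a b (n + 1) a * iteratedDeriv n f a - boundarySum f a b n := by
  have hshift : ∑ m ∈ Icc 1 n, (-1:ℝ) ^ (n + 1 - m + 2) *
      ((b - a) ^ m / (2 * (m.factorial : ℝ))) *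
      (iteratedDeriv (m - 1) f b - (-1:ℝ) ^ m * iteratedDeriv (m - 1) f a) =
        -boundarySum f a b n := by
    rw [boundarySum, ← sum_neg_distrib]
    refine sum_congr rfl fun m hm => ?_
    rw [show n + 1 - m + 2 = n - m + 2 + 1 by have := (mem_Icc.1 hm).2; omega, pow_succ]
    ring
  rw [boundarySum, sum_Icc_succ_top (by omega), hshift, peanoKernel_succ_left,
    peanoKernel_succ_right, Nat.sub_self, Nat.add_sub_cancel]
  ring

theorem boundarySum_add_integral_eq {f : ℝ → ℝ} {a b : ℝ} {U : Set ℝ} (hU : IsOpen U)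
    (hab : a ≤ b) (hsub : Set.Icc a b ⊆ U) (n : ℕ)
    (hdiff : ∀ k < n, DifferentiableOn ℝ (iteratedDeriv k f) U)
    (hint : IntervalIntegrable (iteratedDeriv n f) volume a b) :
    boundarySum f a b n + (-1) ^ n * ∫ x in a..b, f x =
      ∫ x in a..b, peanoKernel a b n x * iteratedDeriv n f x := by
  induction n with
  | zero => simp [boundarySum, peanoKernel]
  | succ n ih =>
    have hdn : DifferentiableOn ℝ (iteratedDeriv n f) U := hdiff n n.lt_succ_self
    have hcont : ContinuousOn (iteratedDeriv n f) (Set.uIcc a b) :=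
      hdn.continuousOn.mono (Set.uIcc_of_le hab ▸ hsub)
    have hderiv : ∀ x ∈ Set.Ioo (min a b) (max a b),
        HasDerivAt (iteratedDeriv n f) (iteratedDeriv (n + 1) f x) x := by
      intro x hx
      rw [min_eq_left hab, max_eq_right hab] at hx
      rw [iteratedDeriv_succ]
      exact (hdn.differentiableAt (hU.mem_nhds (hsub (Set.Ioo_subset_Icc_self hx)))).hasDerivAt
    have hparts : ∫ x in a..b, peanoKernel a b (n + 1) x * iteratedDeriv (n + 1) f x =
        peanoKernel a b (n + 1) b * iteratedDeriv n f b -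
          peanoKernel a b (n + 1) a * iteratedDeriv n f a -
          ∫ x in a..b, peanoKernel a b n x * iteratedDeriv n f x :=
      integral_mul_deriv_eq_deriv_mul_of_hasDerivAt
        continuous_peanoKernel.continuousOn hcont (fun x _ => hasDerivAt_peanoKernel_succ x) hderiv
        (continuous_peanoKernel.intervalIntegrable _ _) hint
    rw [hparts, ← ih (fun k hk => hdiff k (hk.trans n.lt_succ_self))
      (hcont.intervalIntegrable), boundarySum_succ, pow_succ]
    ring

theorem add_abs_div_two_le_of_sConcaveOn {g : ℝ → ℝ} {s q : ℝ} {A : Set ℝ} (hq : 1 ≤ q)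
    (hsc : sConcaveOn s A (fun x => |g x| ^ q)) {x y : ℝ} (hx : x ∈ A) (hy : y ∈ A) :
    (|g x| + |g y|) / 2 ≤ 2 ^ ((s - 1) / q) * |g ((x + y) / 2)| := by
  have hq0 : 0 < q := zero_lt_one.trans_le hq
  have hmid := hsc x hx y hy (1 / 2) ⟨by norm_num, by norm_num⟩
  rw [show (1:ℝ) - 1 / 2 = 1 / 2 by norm_num, show 1 / 2 * x + 1 / 2 * y = (x + y) / 2 by ring,
    ← mul_add] at hmid
  have hconv := (convexOn_rpow hq).2 (Set.mem_Ici.2 (abs_nonneg (g x)))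
    (Set.mem_Ici.2 (abs_nonneg (g y))) (by norm_num : (0:ℝ) ≤ 1 / 2)
    (by norm_num : (0:ℝ) ≤ 1 / 2) (by norm_num)
  simp only [smul_eq_mul] at hconv
  have hhalf : (1 / 2 : ℝ) = 2 ^ (s - 1) * (1 / 2) ^ s := by
    rw [Real.rpow_sub_one two_ne_zero, Real.div_rpow zero_le_one zero_le_two, Real.one_rpow]
    field_simp
  rw [← Real.rpow_le_rpow_iff (by positivity) (by positivity) hq0,
    Real.mul_rpow (by positivity) (abs_nonneg _), ← Real.rpow_mul zero_le_two,
    div_mul_cancel₀ _ hq0.ne']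
  calc ((|g x| + |g y|) / 2) ^ q = (1 / 2 * |g x| + 1 / 2 * |g y|) ^ q := by ring_nf
    _ ≤ 1 / 2 * |g x| ^ q + 1 / 2 * |g y| ^ q := hconv
    _ = 2 ^ (s - 1) * ((1 / 2) ^ s * (|g x| ^ q + |g y| ^ q)) := by rw [← mul_assoc, ← hhalf]; ring
    _ ≤ 2 ^ (s - 1) * |g ((x + y) / 2)| ^ q := by gcongr

theorem abs_integral_mul_le_of_abs_reflect {K g : ℝ → ℝ} {a b M : ℝ} (hab : a ≤ b)
    (hK : IntervalIntegrable K volume a b)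
    (hKg : IntervalIntegrable (fun x => K x * g x) volume a b)
    (hKsymm : ∀ x, |K (a + b - x)| = |K x|)
    (hg : ∀ x ∈ Set.Icc a b, (|g x| + |g (a + b - x)|) / 2 ≤ M) :
    |∫ x in a..b, K x * g x| ≤ M * ∫ x in a..b, |K x| := by
  have habs := hKg.abs
  have hreflect : IntervalIntegrable (fun x => |K (a + b - x) * g (a + b - x)|) volume a b := by
    simpa using (habs.comp_sub_left (a + b)).symm
  have hsymm : ∫ x in a..b, |K (a + b - x) * g (a + b - x)| = ∫ x in a..b, |K x * g x| := by
    simpa using integral_comp_sub_left (a := a) (b := b) (fun x => |K x * g x|) (a + b)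
  have htwice : 2 * ∫ x in a..b, |K x * g x| ≤ 2 * (M * ∫ x in a..b, |K x|) := by
    calc 2 * ∫ x in a..b, |K x * g x|
        = ∫ x in a..b, (|K x * g x| + |K (a + b - x) * g (a + b - x)|) := by
          rw [integral_add habs hreflect, hsymm, two_mul]
      _ ≤ ∫ x in a..b, 2 * M * |K x| := by
          refine integral_mono_on hab (habs.add hreflect) (hK.abs.const_mul _) fun x hx => ?_
          rw [abs_mul, abs_mul, hKsymm, ← mul_add, mul_comm (2 * M)]
          have := hg x hx
          gcongr
          linarith
      _ = 2 * (M * ∫ x in a..b, |K x|) := by rw [intervalIntegral.integral_const_mul]; ring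
  exact (abs_integral_le_integral_abs hab).trans (by linarith)

theorem one_div_add_one_le_rpow {x p : ℝ} (hx : 0 ≤ x) (hp : 1 ≤ p) :
    1 / (x + 1) ≤ (1 / (x * p + 1)) ^ (1 / p) := by
  have hp0 : 0 < p := zero_lt_one.trans_le hp
  have hbernoulli : x * p + 1 ≤ (x + 1) ^ p := by
    simpa [mul_comm, add_comm] using one_add_mul_self_le_rpow_one_add (s := x) (by linarith) hp
  have hroot : (x * p + 1) ^ (1 / p) ≤ x + 1 := by
    calc (x * p + 1) ^ (1 / p) ≤ ((x + 1) ^ p) ^ (1 / p) := by gcongr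
      _ = x + 1 := by rw [← Real.rpow_mul (by positivity), mul_one_div_cancel hp0.ne', Real.rpow_one]
  rw [Real.div_rpow zero_le_one (by positivity), Real.one_rpow]
  gcongr

theorem stmt16_general (I : Set ℝ) (f : ℝ → ℝ) (n : ℕ) (a b : ℝ)
    (hab : a < b) (hsub : Set.Icc a b ⊆ interior I)
    (hdiff : ∀ k < n, DifferentiableOn ℝ (iteratedDeriv k f) (interior I))
    (hint : IntervalIntegrable (iteratedDeriv n f) volume a b)
    (s : ℝ) (p q : ℝ) (hq : 1 < q) (hp : p = q / (q - 1))
    (hsc : sConcaveOn s (Set.Icc a b) (fun x => |iteratedDeriv n f x| ^ q)) :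
    |(∑ m ∈ Finset.Icc 1 n, (-1:ℝ) ^ (n - m + 2) * ((b - a) ^ m / (2 * (m.factorial : ℝ))) * (iteratedDeriv (m - 1) f b - (-1:ℝ) ^ m * iteratedDeriv (m - 1) f a)) + (-1:ℝ) ^ n * (∫ x in a..b, f x)| ≤
      ((b - a) ^ (n + 1) / (n.factorial : ℝ)) * ((1 / ((n:ℝ) * p + 1)) ^ (1 / p)) *
        (2:ℝ) ^ ((s - 1) / q) * |iteratedDeriv n f ((a + b) / 2)| := by
  have hp1 : 1 ≤ p := by
    rw [hp, le_div_iff₀ (by linarith)]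
    linarith
  have hmid : ∀ x ∈ Set.Icc a b, (|iteratedDeriv n f x| + |iteratedDeriv n f (a + b - x)|) / 2 ≤
      2 ^ ((s - 1) / q) * |iteratedDeriv n f ((a + b) / 2)| := fun x hx => by
    simpa using add_abs_div_two_le_of_sConcaveOn (y := a + b - x) hq.le hsc hx
      ⟨by linarith [hx.2], by linarith [hx.1]⟩
  change |boundarySum f a b n + (-1) ^ n * ∫ x in a..b, f x| ≤ _
  rw [boundarySum_add_integral_eq isOpen_interior hab.le hsub n hdiff hint]
  calc |∫ x in a..b, peanoKernel a b n x * iteratedDeriv n f x|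
      ≤ 2 ^ ((s - 1) / q) * |iteratedDeriv n f ((a + b) / 2)| *
          ∫ x in a..b, |peanoKernel a b n x| :=
        abs_integral_mul_le_of_abs_reflect hab.le (continuous_peanoKernel.intervalIntegrable _ _)
          (hint.continuousOn_mul continuous_peanoKernel.continuousOn) abs_peanoKernel_reflect hmid
    _ ≤ 2 ^ ((s - 1) / q) * |iteratedDeriv n f ((a + b) / 2)| *
          ((b - a) ^ (n + 1) / (n + 1).factorial) := by
        gcongr
        exact integral_abs_peanoKernel_le hab.le
    _ = (b - a) ^ (n + 1) / n.factorial * (1 / (n + 1)) * 2 ^ ((s - 1) / q) *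
          |iteratedDeriv n f ((a + b) / 2)| := by
        rw [Nat.factorial_succ]
        push_cast
        field_simp
    _ ≤ _ := by
        gcongr
        exact one_div_add_one_le_rpow n.cast_nonneg hp1

theorem stmt16 (I : Set ℝ) (f : ℝ → ℝ) (n : ℕ) (a b : ℝ)
    (hI : I ⊆ Set.Ici (0:ℝ)) (hab : a < b) (hsub : Set.Icc a b ⊆ interior I)
    (hdiff : ∀ k < n, DifferentiableOn ℝ (iteratedDeriv k f) (interior I))
    (hint : IntervalIntegrable (iteratedDeriv n f) volume a b)
    (s : ℝ) (hs : s ∈ Set.Ioc (0:ℝ) 1) (p q : ℝ) (hq : 1 < q) (hp : p = q / (q - 1))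
    (hsc : sConcaveOn s (Set.Icc a b) (fun x => |iteratedDeriv n f x| ^ q)) :
    |(∑ m ∈ Finset.Icc 1 n, (-1:ℝ) ^ (n - m + 2) * ((b - a) ^ m / (2 * (m.factorial : ℝ))) * (iteratedDeriv (m - 1) f b - (-1:ℝ) ^ m * iteratedDeriv (m - 1) f a)) + (-1:ℝ) ^ n * (∫ x in a..b, f x)| ≤
      ((b - a) ^ (n + 1) / (n.factorial : ℝ)) * ((1 / ((n:ℝ) * p + 1)) ^ (1 / p)) *
        (2:ℝ) ^ ((s - 1) / q) * |iteratedDeriv n f ((a + b) / 2)| :=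
  stmt16_general I f n a b hab hsub hdiff hint s p q hq hp hsc
end
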